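/- arXiv:2404.17924 — 5 statements merged into one kernel-verified Lean document; each statement's English description precedes it below -/
import Mathlib

section
/- For E ⊆ 𝒢, define the natural extension desext(E) := posi(E ∪ G₊). If 0 ∉ desext(E), then desext(E) is a coherent set of desirable gambles containing E, and it is the minimal such: every coherent D with E ⊆ D satisfies desext(E) ⊆ D. -/
open scoped BigOperators

universe u v

def GambleSpace (Ω : Type v) : Submodule ℝ (Ω → ℝ) where
  carrier := {f | ∃ M, ∀ ω, |f ω| ≤ M}
  add_mem' := by
    rintro f g ⟨M, hM⟩ ⟨N, hN⟩
    exact ⟨M + N, fun ω => (abs_add_le _ _).trans (add_le_add (hM ω) (hN ω))⟩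
  zero_mem' := ⟨0, fun ω => by simp⟩
  smul_mem' := by
    rintro c f ⟨M, hM⟩
    exact ⟨|c| * M, fun ω => by
      simpa [abs_mul] using mul_le_mul_of_nonneg_left (hM ω) (abs_nonneg c)⟩

/-- The type of gambles: bounded functions `Ω → ℝ`. -/
abbrev Gamble (Ω : Type v) := GambleSpace Ω

/-- Pointwise order on gambles: `gle f g` means `f ≤ g` pointwise. -/
def gle {Ω : Type v} (f g : Gamble Ω) : Prop := ∀ ω, (f : Ω → ℝ) ω ≤ (g : Ω → ℝ) ω

/-- Gambles weakly dominating `0`. -/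
def Gpos (Ω : Type v) : Set (Gamble Ω) := {g | gle 0 g ∧ g ≠ 0}

/-- Positive linear hull: finite positive combinations of members of `B`. -/
def posi {Ω : Type v} (B : Set (Gamble Ω)) : Set (Gamble Ω) :=
  {f | ∃ n : ℕ, 0 < n ∧ ∃ (l : Fin n → ℝ) (g : Fin n → Gamble Ω),
    (∀ i, 0 < l i) ∧ (∀ i, g i ∈ B) ∧ f = ∑ i, l i • g i}

/-- Natural extension of a set of gambles. -/
def desext {Ω : Type v} (E : Set (Gamble Ω)) : Set (Gamble Ω) := posi (E ∪ Gpos Ω)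

/-- Coherence for a set of desirable gambles. -/
def CoherentD {Ω : Type v} (D : Set (Gamble Ω)) : Prop :=
  (0 : Gamble Ω) ∉ D ∧ Gpos Ω ⊆ D ∧
  (∀ g ∈ D, ∀ l : ℝ, 0 < l → l • g ∈ D) ∧
  (∀ f ∈ D, ∀ g ∈ D, f + g ∈ D)

/-- Coherence for a set of desirable gamble sets. -/
def CoherentK {Ω : Type v} (K : Set (Set (Gamble Ω))) : Prop :=
  (∅ : Set (Gamble Ω)) ∉ K ∧
  (∀ A ∈ K, A \ {0} ∈ K) ∧
  (∀ g ∈ Gpos Ω, ({g} : Set (Gamble Ω)) ∈ K) ∧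
  (∀ A ∈ K, ∀ B : Set (Gamble Ω), A ⊆ B → B ∈ K) ∧
  (∀ A ∈ K, ∀ F : Gamble Ω → Gamble Ω, (∀ g ∈ A, gle g (F g)) → F '' A ∈ K) ∧
  (∀ n : ℕ, 0 < n → ∀ A : Fin n → Set (Gamble Ω), (∀ i, A i ∈ K) →
    ∀ F : (Fin n → Gamble Ω) → Gamble Ω,
    (∀ g : Fin n → Gamble Ω, (∀ i, g i ∈ A i) → F g ∈ posi (Set.range g)) →
    {b | ∃ g : Fin n → Gamble Ω, (∀ i, g i ∈ A i) ∧ b = F g} ∈ K)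

/-- The infinite addition axiom. -/
def KAddInf {Ω : Type v} (K : Set (Set (Gamble Ω))) : Prop :=
  ∀ (I : Type v) (A : I → Set (Gamble Ω)), (∀ i, A i ∈ K) →
    ∀ F : (I → Gamble Ω) → Gamble Ω,
    (∀ g : I → Gamble Ω, (∀ i, g i ∈ A i) → F g ∈ posi (Set.range g)) →
    {b | ∃ g : I → Gamble Ω, (∀ i, g i ∈ A i) ∧ b = F g} ∈ K

/-- Natural extension of a set of gamble sets (nonempty case). -/
def ExtK {Ω : Type v} (𝒜 : Set (Set (Gamble Ω))) : Set (Set (Gamble Ω)) :=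
  {B | ∃ n : ℕ, 0 < n ∧ ∃ A : Fin n → Set (Gamble Ω), (∀ i, A i ∈ 𝒜) ∧
    ∀ g : Fin n → Gamble Ω, (∀ i, g i ∈ A i) →
      (0 : Gamble Ω) ∉ desext (Set.range g) → ∃ f ∈ B, f ∈ desext (Set.range g)}

section Posi

variable {Ω : Type v} {B : Set (Gamble Ω)}

lemma subset_posi : B ⊆ posi B := fun g hg =>
  ⟨1, one_pos, fun _ => 1, fun _ => g, fun _ => one_pos, fun _ => hg, by simp⟩

lemma smul_mem_posi {g : Gamble Ω} (hg : g ∈ posi B) {c : ℝ} (hc : 0 < c) :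
    c • g ∈ posi B := by
  obtain ⟨n, hn, l, f, hl, hf, rfl⟩ := hg
  refine ⟨n, hn, fun i => c * l i, f, fun i => mul_pos hc (hl i), hf, ?_⟩
  simp only [Finset.smul_sum, mul_smul]

lemma add_mem_posi {f g : Gamble Ω} (hf : f ∈ posi B) (hg : g ∈ posi B) :
    f + g ∈ posi B := by
  obtain ⟨n, hn, l, f, hl, hf, rfl⟩ := hf
  obtain ⟨m, -, l', g, hl', hg, rfl⟩ := hg
  refine ⟨n + m, by omega, Fin.append l l', Fin.append f g, ?_, ?_, ?_⟩
  · simpa only [Fin.forall_fin_add, Fin.append_left, Fin.append_right] using ⟨hl, hl'⟩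
  · simpa only [Fin.forall_fin_add, Fin.append_left, Fin.append_right] using ⟨hf, hg⟩
  · simp only [Fin.sum_univ_add, Fin.append_left, Fin.append_right]

lemma posi_subset {D : Set (Gamble Ω)} (hB : B ⊆ D)
    (hsmul : ∀ g ∈ D, ∀ c : ℝ, 0 < c → c • g ∈ D) (hadd : ∀ f ∈ D, ∀ g ∈ D, f + g ∈ D) :
    posi B ⊆ D := by
  rintro _ ⟨n, hn, l, g, hl, hg, rfl⟩
  exact Finset.sum_induction_nonempty _ (· ∈ D) (fun a b ha hb => hadd a ha b hb)
    (Finset.univ_nonempty_iff.2 ⟨⟨0, hn⟩⟩) fun i _ => hsmul _ (hB (hg i)) _ (hl i)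

end Posi

lemma coherentD_desext {Ω : Type v} {E : Set (Gamble Ω)} (h : (0 : Gamble Ω) ∉ desext E) :
    CoherentD (desext E) :=
  ⟨h, subset_posi.trans' Set.subset_union_right, fun _ hg _ hc => smul_mem_posi hg hc,
    fun _ hf _ hg => add_mem_posi hf hg⟩

theorem stmt1_general {Ω : Type v} (E : Set (Gamble Ω))
    (h : (0 : Gamble Ω) ∉ desext E) :
    CoherentD (desext E) ∧ E ⊆ desext E ∧
      ∀ D : Set (Gamble Ω), CoherentD D → E ⊆ D → desext E ⊆ D :=
  ⟨coherentD_desext h, subset_posi.trans' Set.subset_union_left,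
    fun _ ⟨_, hpos, hsmul, hadd⟩ hE => posi_subset (Set.union_subset hE hpos) hsmul hadd⟩

theorem stmt1 {Ω : Type v} [Nonempty Ω] (E : Set (Gamble Ω))
    (h : (0 : Gamble Ω) ∉ desext E) :
    CoherentD (desext E) ∧ E ⊆ desext E ∧
      ∀ D : Set (Gamble Ω), CoherentD D → E ⊆ D → desext E ⊆ D :=
  stmt1_general E h
end

section
/- For E ⊆ 𝒢 with 0 ∈ desext(E) := posi(E ∪ G₊), there is no coherent set of desirable gambles D with E ⊆ D. -/
open scoped BigOperators

universe u v

theorem Fin.sum_smul_mem_of_smul_add_closed {M : Type*} [AddCommMonoid M] [SMul ℝ M]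
    {D : Set M} (hsmul : ∀ g ∈ D, ∀ l : ℝ, 0 < l → l • g ∈ D)
    (hadd : ∀ f ∈ D, ∀ g ∈ D, f + g ∈ D) {n : ℕ} (hn : 0 < n) (l : Fin n → ℝ) (g : Fin n → M)
    (hl : ∀ i, 0 < l i) (hg : ∀ i, g i ∈ D) : ∑ i, l i • g i ∈ D := by
  induction n, hn using Nat.le_induction with
  | base => simpa using hsmul (g 0) (hg 0) (l 0) (hl 0)
  | succ k _ ih =>
    rw [Fin.sum_univ_succ]
    exact hadd _ (hsmul (g 0) (hg 0) (l 0) (hl 0)) _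
      (ih (fun i => l i.succ) (fun i => g i.succ) (fun i => hl _) (fun i => hg _))

theorem posi_mono {Ω : Type v} {B C : Set (Gamble Ω)} (hBC : B ⊆ C) : posi B ⊆ posi C := by
  rintro f ⟨n, hn, l, g, hl, hg, rfl⟩
  exact ⟨n, hn, l, g, hl, fun i => hBC (hg i), rfl⟩

theorem posi_subset_of_smul_add_closed {Ω : Type v} {D : Set (Gamble Ω)}
    (hsmul : ∀ g ∈ D, ∀ l : ℝ, 0 < l → l • g ∈ D) (hadd : ∀ f ∈ D, ∀ g ∈ D, f + g ∈ D) :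
    posi D ⊆ D := by
  rintro f ⟨n, hn, l, g, hl, hg, rfl⟩
  exact Fin.sum_smul_mem_of_smul_add_closed hsmul hadd hn l g hl hg

theorem CoherentD.desext_subset {Ω : Type v} {D E : Set (Gamble Ω)} (hD : CoherentD D)
    (hE : E ⊆ D) : desext E ⊆ D := by
  obtain ⟨-, hpos, hsmul, hadd⟩ := hD
  exact (posi_mono (Set.union_subset hE hpos)).trans (posi_subset_of_smul_add_closed hsmul hadd)

theorem stmt2_general {Ω : Type v} (E : Set (Gamble Ω))
    (h : (0 : Gamble Ω) ∈ desext E) :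
    ¬ ∃ D : Set (Gamble Ω), CoherentD D ∧ E ⊆ D := by
  rintro ⟨D, hD, hE⟩
  exact hD.1 (hD.desext_subset hE h)

theorem stmt2 {Ω : Type v} [Nonempty Ω] (E : Set (Gamble Ω))
    (h : (0 : Gamble Ω) ∈ desext E) :
    ¬ ∃ D : Set (Gamble Ω), CoherentD D ∧ E ⊆ D :=
  stmt2_general E h
end

section
/- Suppose 𝒦 ⊆ 𝒫(𝒢) is coherent and A₁,…,Aₙ ∈ 𝒦. If B ⊆ 𝒢 is such that for every sequence (g₁,…,gₙ) ∈ A₁ × … × Aₙ, either 0 ∈ desext({g₁,…,gₙ}) or there exists f ∈ B with f ∈ desext({g₁,…,gₙ}), then B ∈ 𝒦. -/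
open scoped BigOperators

universe u v

/-! If `B` contains a gamble of `Gpos`, (K⪈0) and (K⊇) suffice. Otherwise, for every selection
`g`, the element `0` or `f ∈ B` of `desext (range g)` dominates some `c ∈ posi (range g)`.
(KAdd) collects one such `c` per selection into a member of `K`, (KDom) raises each `c` to `0`
or to a member of `B`, and (K0) and (K⊇) finish. -/

lemma Gamble.coe_sum_smul_apply {Ω : Type v} {ι : Type*} (s : Finset ι) (l : ι → ℝ)
    (g : ι → Gamble Ω) (ω : Ω) :
    (↑(∑ i ∈ s, l i • g i) : Ω → ℝ) ω = ∑ i ∈ s, l i * (g i : Ω → ℝ) ω := by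
  simp [AddSubmonoidClass.coe_finsetSum, Finset.sum_apply]

lemma sum_smul_mem_posi {Ω : Type v} {B : Set (Gamble Ω)} {ι : Type*} {s : Finset ι}
    (hs : s.Nonempty) {l : ι → ℝ} {g : ι → Gamble Ω}
    (hl : ∀ i ∈ s, 0 < l i) (hg : ∀ i ∈ s, g i ∈ B) :
    ∑ i ∈ s, l i • g i ∈ posi B := by
  refine ⟨s.card, s.card_pos.mpr hs, fun j => l (s.equivFin.symm j),
    fun j => g (s.equivFin.symm j), fun j => hl _ (s.equivFin.symm j).2,
    fun j => hg _ (s.equivFin.symm j).2, ?_⟩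
  rw [← Finset.sum_coe_sort s]
  exact Fintype.sum_equiv s.equivFin _ _ fun _ => by simp

lemma posi_Gpos_subset {Ω : Type v} : posi (Gpos Ω) ⊆ Gpos Ω := by
  rintro _ ⟨n, hn, l, g, hl, hg, rfl⟩
  have hterm : ∀ i ω, 0 ≤ l i * (g i : Ω → ℝ) ω := fun i ω =>
    mul_nonneg (hl i).le (by simpa using (hg i).1 ω)
  refine ⟨fun ω => ?_, fun hzero => ?_⟩
  · simpa [Gamble.coe_sum_smul_apply] using Finset.sum_nonneg fun i _ => hterm i ω
  · let i₀ : Fin n := ⟨0, hn⟩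
    obtain ⟨ω, hω⟩ : ∃ ω, (g i₀ : Ω → ℝ) ω ≠ 0 := by
      by_contra! h
      exact (hg i₀).2 (Subtype.ext (funext h))
    have hpos : 0 < ∑ i, l i * (g i : Ω → ℝ) ω :=
      Finset.sum_pos' (fun i _ => hterm i ω) ⟨i₀, Finset.mem_univ _,
        mul_pos (hl i₀) (lt_of_le_of_ne (by simpa using (hg i₀).1 ω) hω.symm)⟩
    have hzero_at : (↑(∑ i, l i • g i) : Ω → ℝ) ω = 0 := by simp [hzero]
    rw [Gamble.coe_sum_smul_apply] at hzero_at
    exact hpos.ne' hzero_at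

/-- The `E`-part of the combination is dominated by it; if that part is empty, the combination
lies in `posi (Gpos Ω) ⊆ Gpos Ω`. -/
lemma exists_posi_gle_of_mem_desext {Ω : Type v} {E : Set (Gamble Ω)} {x : Gamble Ω}
    (hx : x ∈ desext E) (hx_pos : x ∉ Gpos Ω) : ∃ c ∈ posi E, gle c x := by
  classical
  obtain ⟨n, hn, l, g, hl, hg, rfl⟩ := hx
  set S := Finset.univ.filter fun i => g i ∈ E
  by_cases hS : S.Nonempty
  · refine ⟨∑ i ∈ S, l i • g i, sum_smul_mem_posi hS (fun i _ => hl i)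
      (fun i hi => (Finset.mem_filter.mp hi).2), fun ω => ?_⟩
    rw [Gamble.coe_sum_smul_apply, Gamble.coe_sum_smul_apply,
      ← Finset.sum_filter_add_sum_filter_not Finset.univ fun i => g i ∈ E]
    refine le_add_of_nonneg_right (Finset.sum_nonneg fun i hi => ?_)
    have hi : g i ∈ Gpos Ω := (hg i).resolve_left (Finset.mem_filter.mp hi).2
    exact mul_nonneg (hl i).le (by simpa using hi.1 ω)
  · refine absurd (posi_Gpos_subset ⟨n, hn, l, g, hl, fun i => ?_, rfl⟩) hx_pos
    exact (hg i).resolve_left fun hi => hS ⟨i, by simp [S, hi]⟩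

namespace CoherentK

variable {Ω : Type v} {K : Set (Set (Gamble Ω))}

lemma mem_of_mem_Gpos (hK : CoherentK K) {B : Set (Gamble Ω)} {f : Gamble Ω}
    (hfB : f ∈ B) (hf : f ∈ Gpos Ω) : B ∈ K :=
  hK.2.2.2.1 _ (hK.2.2.1 f hf) B (Set.singleton_subset_iff.mpr hfB)

lemma exists_mem_forall_of_forall_posi (hK : CoherentK K) {n : ℕ} (hn : 0 < n)
    {A : Fin n → Set (Gamble Ω)} (hA : ∀ i, A i ∈ K) {P : Gamble Ω → Prop}
    (hP : ∀ g : Fin n → Gamble Ω, (∀ i, g i ∈ A i) → ∃ c ∈ posi (Set.range g), P c) :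
    ∃ D ∈ K, ∀ d ∈ D, P d := by
  have hP' : ∀ g : Fin n → Gamble Ω, ∃ c : Gamble Ω,
      (∀ i, g i ∈ A i) → c ∈ posi (Set.range g) ∧ P c := fun g => by
    by_cases hg : ∀ i, g i ∈ A i
    · obtain ⟨c, hc⟩ := hP g hg
      exact ⟨c, fun _ => hc⟩
    · exact ⟨0, fun h => absurd h hg⟩
  choose F hF using hP'
  refine ⟨_, hK.2.2.2.2.2 n hn A hA F fun g hg => (hF g hg).1, ?_⟩
  rintro _ ⟨g, hg, rfl⟩
  exact (hF g hg).2

lemma mem_of_forall_gle_zero_or_gle_mem (hK : CoherentK K) {D B : Set (Gamble Ω)}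
    (hD : D ∈ K) (hDB : ∀ d ∈ D, gle d 0 ∨ ∃ f ∈ B, gle d f) : B ∈ K := by
  have hDB' : ∀ d, ∃ y : Gamble Ω, d ∈ D → gle d y ∧ (y = 0 ∨ y ∈ B) := fun d => by
    by_cases hd : d ∈ D
    · rcases hDB d hd with h0 | ⟨f, hfB, hf⟩
      · exact ⟨0, fun _ => ⟨h0, Or.inl rfl⟩⟩
      · exact ⟨f, fun _ => ⟨hf, Or.inr hfB⟩⟩
    · exact ⟨0, fun h => absurd h hd⟩
  choose Φ hΦ using hDB'
  have hΦD : Φ '' D \ {0} ∈ K := hK.2.1 _ (hK.2.2.2.2.1 D hD Φ fun d hd => (hΦ d hd).1)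
  refine hK.2.2.2.1 _ hΦD B ?_
  rintro _ ⟨⟨d, hd, rfl⟩, hne⟩
  exact (hΦ d hd).2.resolve_left hne

end CoherentK

theorem stmt6_general {Ω : Type v} (K : Set (Set (Gamble Ω))) (hK : CoherentK K)
    {n : ℕ} (hn : 0 < n) (A : Fin n → Set (Gamble Ω)) (hA : ∀ i, A i ∈ K)
    (B : Set (Gamble Ω))
    (hB : ∀ g : Fin n → Gamble Ω, (∀ i, g i ∈ A i) →
      (0 : Gamble Ω) ∈ desext (Set.range g) ∨ ∃ f ∈ B, f ∈ desext (Set.range g)) :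
    B ∈ K := by
  by_cases hBpos : ∃ f ∈ B, f ∈ Gpos Ω
  · obtain ⟨f, hfB, hf⟩ := hBpos
    exact hK.mem_of_mem_Gpos hfB hf
  push Not at hBpos
  obtain ⟨D, hD, hDB⟩ := hK.exists_mem_forall_of_forall_posi hn hA
    (P := fun c => gle c 0 ∨ ∃ f ∈ B, gle c f) fun g hg => by
      rcases hB g hg with h0 | ⟨f, hfB, hf⟩
      · obtain ⟨c, hc, hc0⟩ := exists_posi_gle_of_mem_desext h0 fun h => h.2 rfl
        exact ⟨c, hc, Or.inl hc0⟩
      · obtain ⟨c, hc, hcf⟩ := exists_posi_gle_of_mem_desext hf (hBpos f hfB)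
        exact ⟨c, hc, Or.inr ⟨f, hfB, hcf⟩⟩
  exact hK.mem_of_forall_gle_zero_or_gle_mem hD hDB

theorem stmt6 {Ω : Type v} [Nonempty Ω] (K : Set (Set (Gamble Ω))) (hK : CoherentK K)
    {n : ℕ} (hn : 0 < n) (A : Fin n → Set (Gamble Ω)) (hA : ∀ i, A i ∈ K)
    (B : Set (Gamble Ω))
    (hB : ∀ g : Fin n → Gamble Ω, (∀ i, g i ∈ A i) →
      (0 : Gamble Ω) ∈ desext (Set.range g) ∨ ∃ f ∈ B, f ∈ desext (Set.range g)) :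
    B ∈ K :=
  stmt6_general K hK hn A hA B hB
end

section
/- Define Ext(∅) := {B ⊆ 𝒢 : ∃f ∈ B with f ⪈ 0}. Then Ext(∅) is coherent, and it is the minimal coherent set of desirable gamble sets: every coherent 𝒦 contains Ext(∅). -/
open scoped BigOperators

universe u v

section Gpos

variable {Ω : Type v}

lemma mem_Gpos_of_gle {g h : Gamble Ω} (hg : g ∈ Gpos Ω) (hgh : gle g h) : h ∈ Gpos Ω := by
  refine ⟨fun ω => (hg.1 ω).trans (hgh ω), ?_⟩
  rintro rfl
  exact hg.2 (Subtype.ext (funext fun ω => le_antisymm (hgh ω) (hg.1 ω)))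

lemma smul_mem_Gpos {g : Gamble Ω} (hg : g ∈ Gpos Ω) {c : ℝ} (hc : 0 < c) :
    c • g ∈ Gpos Ω :=
  ⟨fun ω => by simpa using mul_nonneg hc.le (by simpa using hg.1 ω), smul_ne_zero hc.ne' hg.2⟩

/-- The sum dominates its first term, which already lies in `Gpos`. -/
lemma posi_subset_Gpos {S : Set (Gamble Ω)} (hS : S ⊆ Gpos Ω) : posi S ⊆ Gpos Ω := by
  rintro _ ⟨n, hn, l, g, hl, hg, rfl⟩
  have hgpos : ∀ i, l i • g i ∈ Gpos Ω := fun i => smul_mem_Gpos (hS (hg i)) (hl i)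
  refine mem_Gpos_of_gle (hgpos ⟨0, hn⟩) fun ω => ?_
  have hnonneg : ∀ i, 0 ≤ ((l i • g i : Gamble Ω) : Ω → ℝ) ω := fun i => by
    simpa using (hgpos i).1 ω
  simpa only [Submodule.coe_sum, Finset.sum_apply] using
    Finset.single_le_sum (fun i _ => hnonneg i) (Finset.mem_univ ⟨0, hn⟩)

end Gpos

theorem stmt9_general {Ω : Type v} :
    CoherentK {B : Set (Gamble Ω) | ∃ f ∈ B, f ∈ Gpos Ω} ∧
    ∀ K : Set (Set (Gamble Ω)), CoherentK K →
      {B : Set (Gamble Ω) | ∃ f ∈ B, f ∈ Gpos Ω} ⊆ K := by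
  refine ⟨⟨?empty, ?removeZero, ?singleton, ?superset, ?dominate, ?add⟩, ?minimal⟩
  case empty => exact fun ⟨_, hf, _⟩ => hf
  case removeZero => exact fun A ⟨f, hfA, hf⟩ => ⟨f, ⟨hfA, hf.2⟩, hf⟩
  case singleton => exact fun g hg => ⟨g, rfl, hg⟩
  case superset => exact fun A ⟨f, hfA, hf⟩ B hAB => ⟨f, hAB hfA, hf⟩
  case dominate =>
    exact fun A ⟨f, hfA, hf⟩ F hF => ⟨F f, ⟨f, hfA, rfl⟩, mem_Gpos_of_gle hf (hF f hfA)⟩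
  case add =>
    intro n _ A hA F hF
    choose g hgA hg using hA
    exact ⟨F g, ⟨g, hgA, rfl⟩, posi_subset_Gpos (Set.range_subset_iff.2 hg) (hF g hgA)⟩
  case minimal =>
    rintro K ⟨-, -, hsingleton, hsuperset, -⟩ B ⟨f, hfB, hf⟩
    exact hsuperset _ (hsingleton f hf) B (Set.singleton_subset_iff.2 hfB)

theorem stmt9 {Ω : Type v} [Nonempty Ω] :
    CoherentK {B : Set (Gamble Ω) | ∃ f ∈ B, f ∈ Gpos Ω} ∧
    ∀ K : Set (Set (Gamble Ω)), CoherentK K →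
      {B : Set (Gamble Ω) | ∃ f ∈ B, f ∈ Gpos Ω} ⊆ K :=
  stmt9_general
end

section
/- Let 𝔻 be a nonempty set of coherent sets of desirable gambles and define 𝒦_𝔻 := {B ⊆ 𝒢 : ∀D ∈ 𝔻, B ∩ D ≠ ∅}. Then 𝒦_𝔻 satisfies the infinite addition axiom: for any family (Aᵢ)_{i∈I} of members of 𝒦_𝔻 and any choice, for each selection (gᵢ)_{i∈I} ∈ ∏Aᵢ, of f_{(gᵢ)} ∈ posi({gᵢ : i ∈ I}), the set {f_{(gᵢ)} : (gᵢ) ∈ ∏Aᵢ} is in 𝒦_𝔻. -/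
open scoped BigOperators

universe u v

/-!
Given a member `D` of `𝔻`, choose from each `A i` a gamble `g i ∈ A i ∩ D`. Then `F g` lies in
`posi (range g) ⊆ posi D = D`, since a coherent set is a convex cone; so `F g` witnesses that the
new set meets `D`.
-/

namespace CoherentD

variable {Ω : Type v} {D : Set (Gamble Ω)}

lemma sum_mem (hD : CoherentD D) {ι : Type*} {s : Finset ι} (hs : s.Nonempty)
    {h : ι → Gamble Ω} (hh : ∀ i ∈ s, h i ∈ D) : ∑ i ∈ s, h i ∈ D := by
  induction hs using Finset.Nonempty.cons_induction with
  | singleton i => simpa using hh i (Finset.mem_singleton_self i)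
  | cons i s hi hs ih =>
    rw [Finset.sum_cons]
    exact hD.2.2.2 _ (hh i (Finset.mem_cons_self i s)) _
      (ih fun j hj => hh j (Finset.mem_cons_of_mem hj))

lemma posi_subset (hD : CoherentD D) {B : Set (Gamble Ω)} (hB : B ⊆ D) : posi B ⊆ D := by
  rintro f ⟨n, hn, l, g, hl, hg, rfl⟩
  exact hD.sum_mem (Finset.univ_nonempty_iff.mpr ⟨⟨0, hn⟩⟩)
    fun i _ => hD.2.2.1 _ (hB (hg i)) _ (hl i)

end CoherentD

theorem stmt14_general {Ω : Type v} (𝔻 : Set (Set (Gamble Ω)))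
    (h2 : ∀ D ∈ 𝔻, CoherentD D) :
    KAddInf {B : Set (Gamble Ω) | ∀ D ∈ 𝔻, (B ∩ D).Nonempty} := by
  intro I A hA F hF D hD
  choose g hgA hgD using fun i => hA i D hD
  refine ⟨F g, ⟨g, hgA, rfl⟩, (h2 D hD).posi_subset ?_ (hF g hgA)⟩
  rintro _ ⟨i, rfl⟩
  exact hgD i

theorem stmt14 {Ω : Type v} [Nonempty Ω] (𝔻 : Set (Set (Gamble Ω)))
    (h1 : 𝔻.Nonempty) (h2 : ∀ D ∈ 𝔻, CoherentD D) :
    KAddInf {B : Set (Gamble Ω) | ∀ D ∈ 𝔻, (B ∩ D).Nonempty} :=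
  stmt14_general 𝔻 h2
end
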